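/- arXiv:2009.10052 — 5 statements merged into one kernel-verified Lean document; each statement's English description precedes it below -/
import Mathlib

section
/- Let E be a set, let A, B ⊆ E, and let (Y_j)_{j ∈ J} be a finite family of subsets of E. Define ‖X‖ = Σ_{j ∈ J} |X|*_{Y_j} for X ⊆ E. Then ‖A ∩ B‖ + ‖A ∪ B‖ ≤ ‖A‖ + ‖B‖. -/
/-! Submodularity is checked one set `Z` at a time. If `A ∩ B` and `A ∪ B` both separate `Z`, then so
do `A` and `B`, which lie between them; and if neither `A` nor `B` separates `Z`, then `Z` lies inside
or outside each of them, hence inside or outside `A ∩ B` and `A ∪ B` as well. -/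

open Pointwise

open scoped Classical in
/-- `sep X Z` is the indicator `|X|*_Z`: it is `1` if `X` separates `Z`
(i.e. `Z` meets both `X` and its complement) and `0` otherwise. -/
noncomputable def sep {E : Type*} (X Z : Set E) : ℕ :=
  if (Z ∩ X).Nonempty ∧ (Z ∩ Xᶜ).Nonempty then 1 else 0

section Separation

variable {E : Type*} {X X₁ X₂ A B Z : Set E}

theorem sep_le_one : sep X Z ≤ 1 := by
  unfold sep
  split_ifs <;> omega

theorem sep_eq_one_iff : sep X Z = 1 ↔ (Z ∩ X).Nonempty ∧ (Z ∩ Xᶜ).Nonempty := by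
  unfold sep
  split_ifs with h <;> simp [h]

theorem sep_eq_zero_iff : sep X Z = 0 ↔ Z ⊆ X ∨ Disjoint Z X := by
  rw [sep, ← Set.not_disjoint_iff_nonempty_inter, Set.inter_compl_nonempty_iff]
  split_ifs <;> tauto

theorem sep_eq_one_of_subset_of_subset (h₁ : X₁ ⊆ X) (h₂ : X ⊆ X₂)
    (hX₁ : sep X₁ Z = 1) (hX₂ : sep X₂ Z = 1) : sep X Z = 1 := by
  rw [sep_eq_one_iff] at *
  exact ⟨hX₁.1.mono (Set.inter_subset_inter_right Z h₁),
    hX₂.2.mono (Set.inter_subset_inter_right Z (Set.compl_subset_compl.mpr h₂))⟩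

theorem sep_inter_eq_zero (hA : sep A Z = 0) (hB : sep B Z = 0) : sep (A ∩ B) Z = 0 := by
  rw [sep_eq_zero_iff] at *
  rcases hA with hA | hA
  · rcases hB with hB | hB
    · exact .inl (Set.subset_inter hA hB)
    · exact .inr (hB.mono_right Set.inter_subset_right)
  · exact .inr (hA.mono_right Set.inter_subset_left)

theorem sep_union_eq_zero (hA : sep A Z = 0) (hB : sep B Z = 0) : sep (A ∪ B) Z = 0 := by
  rw [sep_eq_zero_iff] at *
  rcases hA with hA | hA
  · exact .inl (hA.trans Set.subset_union_left)
  · rcases hB with hB | hB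
    · exact .inl (hB.trans Set.subset_union_right)
    · exact .inr (Disjoint.union_right hA hB)

theorem sep_inter_add_sep_union_le : sep (A ∩ B) Z + sep (A ∪ B) Z ≤ sep A Z + sep B Z := by
  have hboth (h₁ : sep (A ∩ B) Z = 1) (h₂ : sep (A ∪ B) Z = 1) : sep A Z = 1 ∧ sep B Z = 1 :=
    ⟨sep_eq_one_of_subset_of_subset Set.inter_subset_left Set.subset_union_left h₁ h₂,
      sep_eq_one_of_subset_of_subset Set.inter_subset_right Set.subset_union_right h₁ h₂⟩
  have hinter : sep A Z = 0 → sep B Z = 0 → sep (A ∩ B) Z = 0 := sep_inter_eq_zero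
  have hunion : sep A Z = 0 → sep B Z = 0 → sep (A ∪ B) Z = 0 := sep_union_eq_zero
  have : sep (A ∩ B) Z ≤ 1 := sep_le_one
  have : sep (A ∪ B) Z ≤ 1 := sep_le_one
  have : sep A Z ≤ 1 := sep_le_one
  have : sep B Z ≤ 1 := sep_le_one
  omega

end Separation

theorem stmt_1 {E : Type*} {J : Type*} [Fintype J] (A B : Set E) (Y : J → Set E) :
    (∑ j : J, sep (A ∩ B) (Y j)) + (∑ j : J, sep (A ∪ B) (Y j)) ≤
      (∑ j : J, sep A (Y j)) + (∑ j : J, sep B (Y j)) := by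
  simp only [← Finset.sum_add_distrib]
  exact Finset.sum_le_sum fun j _ => sep_inter_add_sep_union_le
end

section
/- Let G be a group acting on a set E, let α ⊆ E be nonempty, and let P ≤ G be the subgroup generated by the pointwise stabilizers Stab_G(e) of the elements e ∈ α. Suppose that for every e ∈ α the intersection of the G-orbit of e with α equals the P-orbit of e, i.e. (G • e) ∩ α = P • e. Then P equals the setwise stabilizer Stab(α) = {g ∈ G : g • α = α}, and α satisfies the (edge) property: for every x ∈ G, α ∩ (x • α) ≠ ∅ implies x ∈ P. -/
open Pointwise

namespace MulAction

variable {G E : Type*} [Group G] [MulAction G E] {α : Set E} {P : Subgroup G}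

theorem le_stabilizer_of_orbit_subgroup_subset (h : ∀ e ∈ α, orbit P e ⊆ α) :
    P ≤ stabilizer G α := by
  intro p hp
  rw [mem_stabilizer_set]
  refine fun b ↦ ⟨fun hpb ↦ ?_, fun hb ↦ h b hb ⟨⟨p, hp⟩, rfl⟩⟩
  simpa [Subgroup.smul_def] using h _ hpb ⟨⟨p, hp⟩⁻¹, rfl⟩

/-- The (edge) property: a translate of `α` meeting `α` comes from `P`. -/
theorem mem_of_inter_smul_nonempty (hstab : ∀ e ∈ α, stabilizer G e ≤ P)
    (horb : ∀ e ∈ α, orbit G e ∩ α ⊆ orbit P e) {x : G} (hx : (α ∩ x • α).Nonempty) :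
    x ∈ P := by
  obtain ⟨_, hxb, b, hb, rfl⟩ := hx
  obtain ⟨p, hpb⟩ := horb b hb ⟨mem_orbit b x, hxb⟩
  have hpx : (p : G)⁻¹ * x ∈ stabilizer G b := by
    rw [mem_stabilizer_iff, mul_smul, ← hpb]
    exact inv_smul_smul (p : G) b
  simpa using mul_mem p.2 (hstab b hb hpx)

end MulAction

open MulAction in
theorem stmt_2 {G E : Type*} [Group G] [MulAction G E]
    (α : Set E) (hα : α.Nonempty)
    (P : Subgroup G) (hP : P = ⨆ e ∈ α, MulAction.stabilizer G e)
    (horb : ∀ e ∈ α, MulAction.orbit G e ∩ α = MulAction.orbit P e) :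
    P = MulAction.stabilizer G α ∧
      ∀ x : G, (α ∩ x • α).Nonempty → x ∈ P := by
  have hstab : ∀ e ∈ α, stabilizer G e ≤ P := fun e he ↦
    hP ▸ le_iSup₂ (f := fun e (_ : e ∈ α) ↦ stabilizer G e) e he
  have edge : ∀ x : G, (α ∩ x • α).Nonempty → x ∈ P := fun _ ↦
    mem_of_inter_smul_nonempty hstab fun e he ↦ (horb e he).subset
  have hPα : P ≤ stabilizer G α := le_stabilizer_of_orbit_subgroup_subset fun e he ↦
    (horb e he).symm.subset.trans Set.inter_subset_right
  refine ⟨hPα.antisymm fun g hg ↦ edge g ?_, edge⟩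
  rwa [mem_stabilizer_iff.mp hg, Set.inter_self]
end

section
/- Assume the Setup (Notation 7.1). Then for every g ∈ G: B ∩ (g • B) ≠ ∅ if and only if g ∈ Q. -/
open Pointwise

/-! Since `Q` stabilises `β`, we have `B = Q • (α ∪ β)`. The edge properties of `α` and `β`,
`P ≤ Q` and the crossing hypothesis show that every `g` with `(α ∪ β) ∩ g • (α ∪ β) ≠ ∅` lies
in `Q`, and this passes to the `Q`-saturation: if `a • s = g • b • t` with `a, b ∈ Q` and
`s, t ∈ α ∪ β`, then `a⁻¹ g b ∈ Q`, hence `g ∈ Q`. -/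

section

variable {G E : Type*} [Group G] [MulAction G E]

namespace Set

lemma Nonempty.inter_inv_smul {s t : Set E} {g : G} (h : (s ∩ g • t).Nonempty) :
    (t ∩ g⁻¹ • s).Nonempty := by
  obtain ⟨x, hxs, y, hyt, rfl⟩ := h
  exact ⟨y, hyt, mem_smul_set_iff_inv_smul_mem.mpr (by rwa [inv_inv])⟩

lemma union_inter_smul_union_nonempty {s t : Set E} {g : G} :
    ((s ∪ t) ∩ g • (s ∪ t)).Nonempty ↔ (s ∩ g • s).Nonempty ∨ (t ∩ g • s).Nonempty ∨
      (s ∩ g • t).Nonempty ∨ (t ∩ g • t).Nonempty := by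
  simp only [smul_set_union, union_inter_distrib_right, inter_union_distrib_left,
    union_nonempty, or_assoc]

end Set

lemma Subgroup.coe_smul_of_le_stabilizer (H : Subgroup G) {t : Set E}
    (hH : H ≤ MulAction.stabilizer G t) : (H : Set G) • t = t := by
  refine subset_antisymm (Set.smul_subset_iff.mpr fun h hh x hx ↦ ?_)
    fun x hx ↦ ⟨1, H.one_mem, x, hx, one_smul G x⟩
  rw [← MulAction.mem_stabilizer_iff.mp (hH hh)]
  exact Set.smul_mem_smul_set hx

lemma Subgroup.mem_of_smul_inter_smul_nonempty (H : Subgroup G) {S : Set E}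
    (hS : ∀ g : G, (S ∩ g • S).Nonempty → g ∈ H) {g : G}
    (h : ((H : Set G) • S ∩ g • ((H : Set G) • S)).Nonempty) : g ∈ H := by
  obtain ⟨_, ⟨a, ha, s, hs, rfl⟩, _, ⟨b, hb, t, ht, rfl⟩, hx⟩ := h
  simp only at hx
  have hmem : a⁻¹ * g * b ∈ H :=
    hS _ ⟨s, hs, t, ht, by simp only [mul_smul, hx, inv_smul_smul]⟩
  simpa [mul_assoc] using H.mul_mem (H.mul_mem ha hmem) (H.inv_mem hb)

lemma union_iUnion_smul_eq_smul_union (H : Subgroup G) {s t : Set E}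
    (hH : H ≤ MulAction.stabilizer G t) :
    t ∪ ⋃ h ∈ H, h • s = (H : Set G) • (s ∪ t) := by
  rw [Set.smul_union, Set.union_comm, ← Set.iUnion_smul_set, H.coe_smul_of_le_stabilizer hH]
  rfl

end

theorem stmt_3_general {G E : Type*} [Group G] [MulAction G E]
    (α β : Set E) (hβ : β.Nonempty)
    (hedgeα : ∀ x : G, (α ∩ x • α).Nonempty → x • α = α)
    (hedgeβ : ∀ x : G, (β ∩ x • β).Nonempty → x • β = β)
    (P Q : Subgroup G)
    (hP : P = MulAction.stabilizer G α)
    (hQ : Q = MulAction.stabilizer G β)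
    (hPQ : P ≤ Q)
    (hsimple : ∀ g : G, (α ∩ g • β).Nonempty → g ∈ Q)
    (B : Set E) (hB : B = β ∪ ⋃ q ∈ Q, q • α) :
    ∀ g : G, (B ∩ g • B).Nonempty ↔ g ∈ Q := by
  subst hP hQ hB
  intro g
  constructor
  · rw [union_iUnion_smul_eq_smul_union _ le_rfl]
    refine Subgroup.mem_of_smul_inter_smul_nonempty _ fun g hg ↦ ?_
    rcases Set.union_inter_smul_union_nonempty.mp hg with hαα | hβα | hαβ | hββ
    · exact hPQ (hedgeα g hαα)
    · exact inv_inv g ▸ inv_mem (hsimple _ hβα.inter_inv_smul)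
    · exact hsimple g hαβ
    · exact hedgeβ g hββ
  · intro hg
    obtain ⟨b, hb⟩ := hβ
    refine ⟨b, Or.inl hb, ?_⟩
    rw [← MulAction.mem_stabilizer_iff.mp hg] at hb
    exact Set.smul_set_mono Set.subset_union_left hb

/-- Setup (Notation 7.1): `α`, `β` are nonempty subsets of a `G`-set `E`, each
satisfying the (edge) property, with setwise stabilizers `P ≤ Q`, meeting each
other, and such that `G•α` and `G•β` cross simply.  With
`B = β ∪ Q • α`, for every `g ∈ G` we have `B ∩ g • B ≠ ∅` iff `g ∈ Q`. -/
theorem stmt_3 {G E : Type*} [Group G] [MulAction G E]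
    (α β : Set E) (hα : α.Nonempty) (hβ : β.Nonempty)
    (hedgeα : ∀ x : G, (α ∩ x • α).Nonempty → x • α = α)
    (hedgeβ : ∀ x : G, (β ∩ x • β).Nonempty → x • β = β)
    (P Q : Subgroup G)
    (hP : P = MulAction.stabilizer G α)
    (hQ : Q = MulAction.stabilizer G β)
    (hαβ : (α ∩ β).Nonempty)
    (hPQ : P ≤ Q)
    (hsimple : ∀ g : G, (α ∩ g • β).Nonempty → g ∈ Q)
    (B : Set E) (hB : B = β ∪ ⋃ q ∈ Q, q • α) :
    ∀ g : G, (B ∩ g • B).Nonempty ↔ g ∈ Q :=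
  stmt_3_general α β hβ hedgeα hedgeβ P Q hP hQ hPQ hsimple B hB
end

section
/- Assume the Setup (Notation 7.1). Then Q • A is disjoint from β, and B = β ∪ Q • α equals the disjoint union of β and Q • A; moreover Q • α, β, B, and Bᶜ are each Q-invariant. -/
/-!
Since `A = α \ β` and every `q ∈ Q` fixes `β`, we get `q • A = q • α \ β`,
which gives the disjointness and the decomposition of `B`.
`Q • α` is `Q`-invariant because `Q` is a subgroup, hence so are `B` and `Bᶜ`.
-/

open Pointwise

namespace MulAction

variable {G E : Type*} [Group G] [MulAction G E]

theorem smul_biUnion_smul_of_mem {H : Subgroup G} {g : G} (hg : g ∈ H) (s : Set E) :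
    g • ⋃ h ∈ H, h • s = ⋃ h ∈ H, h • s := by
  change g • ⋃ h ∈ (H : Set G), h • s = ⋃ h ∈ (H : Set G), h • s
  rw [Set.iUnion_smul_set, ← smul_assoc, smul_coe_set hg]

theorem smul_sdiff_of_le_stabilizer {H : Subgroup G} {t : Set E} (hH : H ≤ stabilizer G t)
    {h : G} (hh : h ∈ H) (s : Set E) : h • (s \ t) = h • s \ t := by
  rw [Set.smul_set_sdiff, mem_stabilizer_iff.mp (hH hh)]

theorem disjoint_biUnion_smul_sdiff {H : Subgroup G} {t : Set E} (hH : H ≤ stabilizer G t)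
    (s : Set E) : Disjoint (⋃ h ∈ H, h • (s \ t)) t :=
  Set.disjoint_iUnion₂_left.mpr fun _ hh ↦ by
    rw [smul_sdiff_of_le_stabilizer hH hh]
    exact Set.disjoint_sdiff_left

theorem union_biUnion_smul_sdiff {H : Subgroup G} {t : Set E} (hH : H ≤ stabilizer G t)
    (s : Set E) : t ∪ ⋃ h ∈ H, h • (s \ t) = t ∪ ⋃ h ∈ H, h • s := by
  have hsdiff : ⋃ h ∈ H, h • (s \ t) = (⋃ h ∈ H, h • s) \ t := by
    simp only [Set.iUnion_sdiff]
    exact Set.iUnion₂_congr fun _ hh ↦ smul_sdiff_of_le_stabilizer hH hh s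
  rw [hsdiff, Set.union_sdiff_self]

end MulAction

theorem stmt_4_general {G E : Type*} [Group G] [MulAction G E]
    (α β : Set E)
    (Q : Subgroup G)
    (hQ : Q = MulAction.stabilizer G β)
    (γ A B : Set E)
    (hγ : γ = α ∩ β) (hA : A = α \ γ) (hB : B = β ∪ ⋃ q ∈ Q, q • α) :
    Disjoint (⋃ q ∈ Q, q • A) β ∧
    B = β ∪ ⋃ q ∈ Q, q • A ∧
    (∀ g ∈ Q, g • (⋃ q ∈ Q, q • α) = ⋃ q ∈ Q, q • α) ∧
    (∀ g ∈ Q, g • β = β) ∧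
    (∀ g ∈ Q, g • B = B) ∧
    (∀ g ∈ Q, g • Bᶜ = Bᶜ) := by
  have hQβ : Q ≤ MulAction.stabilizer G β := hQ.le
  have hBinv : ∀ g ∈ Q, g • B = B := fun g hg ↦ by
    rw [hB, Set.smul_set_union, MulAction.mem_stabilizer_iff.mp (hQβ hg),
      MulAction.smul_biUnion_smul_of_mem hg]
  rw [hA, hγ, Set.sdiff_self_inter]
  exact ⟨MulAction.disjoint_biUnion_smul_sdiff hQβ α,
    by rw [hB, MulAction.union_biUnion_smul_sdiff hQβ],
    fun _ hg ↦ MulAction.smul_biUnion_smul_of_mem hg α, fun _ hg ↦ hQβ hg, hBinv,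
    fun g hg ↦ by rw [Set.smul_set_compl, hBinv g hg]⟩

/-- Setup (Notation 7.1).  With `γ = α ∩ β`, `A = α \ γ` and `B = β ∪ Q • α`:
`Q • A` is disjoint from `β`, `B` is the (disjoint) union of `β` and `Q • A`,
and `Q • α`, `β`, `B`, `Bᶜ` are each `Q`-invariant. -/
theorem stmt_4 {G E : Type*} [Group G] [MulAction G E]
    (α β : Set E) (hα : α.Nonempty) (hβ : β.Nonempty)
    (hedgeα : ∀ x : G, (α ∩ x • α).Nonempty → x • α = α)
    (hedgeβ : ∀ x : G, (β ∩ x • β).Nonempty → x • β = β)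
    (P Q : Subgroup G)
    (hP : P = MulAction.stabilizer G α)
    (hQ : Q = MulAction.stabilizer G β)
    (hαβ : (α ∩ β).Nonempty)
    (hPQ : P ≤ Q)
    (hsimple : ∀ g : G, (α ∩ g • β).Nonempty → g ∈ Q)
    (γ A B : Set E)
    (hγ : γ = α ∩ β) (hA : A = α \ γ) (hB : B = β ∪ ⋃ q ∈ Q, q • α) :
    Disjoint (⋃ q ∈ Q, q • A) β ∧
    B = β ∪ ⋃ q ∈ Q, q • A ∧
    (∀ g ∈ Q, g • (⋃ q ∈ Q, q • α) = ⋃ q ∈ Q, q • α) ∧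
    (∀ g ∈ Q, g • β = β) ∧
    (∀ g ∈ Q, g • B = B) ∧
    (∀ g ∈ Q, g • Bᶜ = Bᶜ) :=
  stmt_4_general α β Q hQ γ A B hγ hA hB
end

section
/- Assume the Setup (Section 7.2). Then A ∩ (x • B) = ∅, and for every g ∈ G the translate g • γ is disjoint from both A and x • B, and the translate g • γ' is disjoint from both A and x • B. In other words, G • (γ ∪ x • γ') is disjoint from A ∪ (x • B), and A and x • B are disjoint from each other. -/
open Pointwise

/-! The (edge) property says exactly that `α` is a block of the action. For a block `α` and any
`S ⊆ α`, a point of `α` in the `G`-orbit `G • S` already lies in `Stab(α) • S`: if `g • s ∈ α` with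
`s ∈ S ⊆ α`, then `g • α` meets `α`, so `g ∈ Stab(α)`. Both `γ` and `γ'` lie in the single
`G`-invariant set `O = G • (α ∩ x • β) = G • (β ∩ x⁻¹ • α)`, and so do all their translates.
Hence `α ∩ O ⊆ γ` and `β ∩ O ⊆ γ'`, which makes `O` disjoint from `A` and, since `x⁻¹ • O = O`,
from `x • B`. Finally `A ∩ x • B ⊆ (α ∩ x • β) \ γ = ∅`. -/

namespace MulAction

variable {G E : Type*} [Group G] [MulAction G E]

theorem isBlock_of_inter_smul_nonempty {B : Set E}
    (h : ∀ g : G, (B ∩ g • B).Nonempty → g • B = B) : IsBlock G B :=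
  isBlock_iff_smul_eq_of_nonempty.2 fun g hg ↦ h g (by rwa [Set.inter_comm])

theorem IsBlock.inter_iUnion_smul_subset {B S : Set E} (hB : IsBlock G B) (hS : S ⊆ B) :
    B ∩ ⋃ g : G, g • S ⊆ ⋃ p ∈ stabilizer G B, p • S := by
  rintro _ ⟨heB, he⟩
  obtain ⟨g, s, hs, rfl⟩ : ∃ g : G, ∃ s ∈ S, g • s = _ := by
    simpa only [Set.mem_iUnion, Set.mem_smul_set] using he
  exact Set.mem_biUnion (hB.smul_eq_of_mem (hS hs) heB) (Set.smul_mem_smul_set hs)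

theorem smul_iUnion_smul (h : G) (S : Set E) : h • ⋃ g : G, g • S = ⋃ g : G, g • S := by
  simp only [Set.smul_set_iUnion, smul_smul]
  exact (Equiv.mulLeft h).iSup_comp (g := fun g ↦ g • S)

theorem iUnion_smul_smul (h : G) (S : Set E) : ⋃ g : G, g • h • S = ⋃ g : G, g • S := by
  simp only [smul_smul]
  exact (Equiv.mulRight h).iSup_comp (g := fun g ↦ g • S)

theorem smul_biUnion_smul_subset (g : G) (H : Subgroup G) (S : Set E) :
    g • ⋃ p ∈ H, p • S ⊆ ⋃ g : G, g • S :=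
  (Set.smul_set_mono (Set.iUnion₂_subset_iUnion _ _)).trans (smul_iUnion_smul g S).subset

end MulAction

open MulAction

/-- Setup (Section 7.2): `α`, `β` satisfy the (edge) property with setwise
stabilizers `P`, `Q`, and `x ∈ G`; `γ = P • (α ∩ x • β)`,
`γ' = Q • (β ∩ x⁻¹ • α)`, `A = α \ γ`, `B = β \ γ'`.  Then `A ∩ x • B = ∅`
and every `G`-translate of `γ` and of `γ'` is disjoint from both `A` and
`x • B`. -/
theorem stmt_8 {G E : Type*} [Group G] [MulAction G E]
    (α β : Set E)
    (hedgeα : ∀ y : G, (α ∩ y • α).Nonempty → y • α = α)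
    (hedgeβ : ∀ y : G, (β ∩ y • β).Nonempty → y • β = β)
    (P Q : Subgroup G)
    (hP : P = MulAction.stabilizer G α)
    (hQ : Q = MulAction.stabilizer G β)
    (x : G)
    (γ γ' A B : Set E)
    (hγ : γ = ⋃ g ∈ P, g • (α ∩ x • β))
    (hγ' : γ' = ⋃ g ∈ Q, g • (β ∩ x⁻¹ • α))
    (hA : A = α \ γ) (hB : B = β \ γ') :
    A ∩ x • B = ∅ ∧
    ∀ g : G, Disjoint (g • γ) A ∧ Disjoint (g • γ) (x • B) ∧
      Disjoint (g • γ') A ∧ Disjoint (g • γ') (x • B) := by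
  subst hP hQ hγ hγ' hA hB
  set S := α ∩ x • β
  set O := ⋃ g : G, g • S
  have hS' : β ∩ x⁻¹ • α = x⁻¹ • S := by
    rw [Set.smul_set_inter, inv_smul_smul, Set.inter_comm]
  have hO' : ⋃ g : G, g • (β ∩ x⁻¹ • α) = O := by rw [hS', iUnion_smul_smul]
  have hαO : α ∩ O ⊆ ⋃ p ∈ stabilizer G α, p • S :=
    (isBlock_of_inter_smul_nonempty hedgeα).inter_iUnion_smul_subset Set.inter_subset_left
  have hβO : β ∩ O ⊆ ⋃ q ∈ stabilizer G β, q • (β ∩ x⁻¹ • α) :=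
    hO' ▸ (isBlock_of_inter_smul_nonempty hedgeβ).inter_iUnion_smul_subset Set.inter_subset_left
  have hOA : Disjoint O (α \ ⋃ p ∈ stabilizer G α, p • S) :=
    Set.disjoint_left.2 fun _ he he' ↦ he'.2 (hαO ⟨he'.1, he⟩)
  have hOB : Disjoint O (x • (β \ ⋃ q ∈ stabilizer G β, q • (β ∩ x⁻¹ • α))) := by
    rw [Set.disjoint_smul_set_right, smul_iUnion_smul]
    exact Set.disjoint_left.2 fun _ he he' ↦ he'.2 (hβO ⟨he'.1, he⟩)
  refine ⟨?_, fun g ↦ ?_⟩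
  · refine Set.subset_empty_iff.1 fun e ⟨heA, heB⟩ ↦ heA.2 ?_
    have heS : e ∈ S := ⟨heA.1, Set.smul_set_mono Set.sdiff_subset heB⟩
    exact Set.mem_biUnion (stabilizer G α).one_mem (by rwa [one_smul])
  · have hγO := smul_biUnion_smul_subset g (stabilizer G α) S
    have hγ'O : g • ⋃ q ∈ stabilizer G β, q • (β ∩ x⁻¹ • α) ⊆ O :=
      hO' ▸ smul_biUnion_smul_subset g (stabilizer G β) _
    exact ⟨hOA.mono_left hγO, hOB.mono_left hγO, hOA.mono_left hγ'O, hOB.mono_left hγ'O⟩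
end
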